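/- The number of conjugacy classes of cyclic subgroups of S_n equals p(n), the number of partitions of n. -/

import Mathlib

/-!
The map `x ↦ ⟨x⟩` induces a bijection from conjugacy classes of `S_n` onto conjugacy classes of
cyclic subgroups: it is injective because two generators of the same cyclic subgroup are powers of
each other with exponents coprime to their order, and such powers preserve the cycle type, hence
the conjugacy class. Conjugacy classes of `S_n` are classified by cycle type, i.e. by partitions
of `n`.
-/

/-- Two subgroups are conjugate if one is the image of the other under conjugation. -/
def subgroupConjRel {G : Type*} [Group G]
    (H K : {H : Subgroup G // ∃ x, H = Subgroup.zpowers x}) : Prop :=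
  ∃ g : G, K.1 = Subgroup.map (MulAut.conj g).toMonoidHom H.1

open Equiv.Perm Subgroup

theorem Nat.Partition.filter_not_two_le_parts_eq_replicate {n : ℕ} (p : n.Partition) :
    p.parts.filter (fun a => ¬2 ≤ a) =
      Multiset.replicate (n - (p.parts.filter (2 ≤ ·)).sum) 1 := by
  have hones : ∀ a ∈ p.parts.filter (fun a => ¬2 ≤ a), a = 1 := fun a ha => by
    have := p.parts_pos (Multiset.mem_filter.1 ha).1
    have := (Multiset.mem_filter.1 ha).2
    omega
  have hsum := (p.parts.sum_filter_add_sum_filter_not (2 ≤ ·)).trans p.parts_sum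
  rw [Multiset.eq_replicate_card.2 hones, Multiset.sum_replicate, smul_eq_mul, mul_one] at hsum
  rw [Multiset.eq_replicate]
  exact ⟨by omega, hones⟩

namespace Equiv.Perm

variable {α : Type*} [Fintype α] [DecidableEq α]

theorem cycleType_pow_of_coprime (σ : Perm α) {m : ℕ} (hm : m.Coprime (orderOf σ)) :
    (σ ^ m).cycleType = σ.cycleType := by
  induction σ using cycle_induction_on with
  | base_one => simp
  | base_cycles c hc =>
    rw [(hc.pow_iff.mpr hm).cycleType, hc.cycleType, support_pow_coprime hm]
  | induction_disjoint σ τ hd _ hσ hτ =>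
    rw [hd.orderOf] at hm
    rw [hd.commute.mul_pow, (hd.pow_disjoint_pow m m).cycleType_mul, hd.cycleType_mul,
      hσ (hm.coprime_dvd_right (Nat.dvd_lcm_left _ _)),
      hτ (hm.coprime_dvd_right (Nat.dvd_lcm_right _ _))]

theorem isConj_of_zpowers_eq {σ τ : Perm α} (h : zpowers σ = zpowers τ) : IsConj σ τ := by
  obtain ⟨m, rfl⟩ : τ ∈ Submonoid.powers σ := by
    rw [mem_powers_iff_mem_zpowers, h]
    exact mem_zpowers τ
  have horder : orderOf σ / (orderOf σ).gcd m = orderOf σ := by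
    rw [← orderOf_pow, ← Nat.card_zpowers, ← Nat.card_zpowers, h]
  have hm : m.Coprime (orderOf σ) :=
    Nat.Coprime.symm ((Nat.div_eq_self.1 horder).resolve_left (orderOf_pos σ).ne')
  rw [isConj_iff_cycleType_eq, cycleType_pow_of_coprime σ hm]

theorem partition_surjective :
    Function.Surjective (partition : Perm α → (Fintype.card α).Partition) := by
  intro p
  have hle : (p.parts.filter (2 ≤ ·)).sum ≤ Fintype.card α :=
    (Nat.le_add_right _ _).trans_eq <|
      (p.parts.sum_filter_add_sum_filter_not (2 ≤ ·)).trans p.parts_sum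
  obtain ⟨σ, hσ⟩ := (exists_with_cycleType_iff α).2
    ⟨hle, fun a ha => (Multiset.mem_filter.1 ha).2⟩
  refine ⟨σ, Nat.Partition.ext ?_⟩
  rw [parts_partition, ← sum_cycleType, hσ, ← p.filter_not_two_le_parts_eq_replicate,
    Multiset.filter_add_not]

noncomputable def conjClassesEquivPartition : ConjClasses (Perm α) ≃ (Fintype.card α).Partition :=
  Equiv.ofBijective (Quotient.lift partition fun _ _ => partition_eq_of_isConj.1)
    ⟨by rintro ⟨σ⟩ ⟨τ⟩ h; exact Quotient.sound (partition_eq_of_isConj.2 h),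
      Function.Surjective.of_comp (g := ConjClasses.mk) partition_surjective⟩

end Equiv.Perm

section CyclicSubgroups

variable {G : Type*} [Group G]

theorem isConj_of_subgroupConjRel (hG : ∀ x y : G, zpowers x = zpowers y → IsConj x y)
    {H K : {H : Subgroup G // ∃ x, H = zpowers x}} (hHK : subgroupConjRel H K) {x y : G}
    (hx : H.1 = zpowers x) (hy : K.1 = zpowers y) : IsConj x y := by
  obtain ⟨g, hg⟩ := hHK
  rw [hx, hy, MonoidHom.map_zpowers] at hg
  exact (isConj_iff.2 ⟨g, rfl⟩).trans (hG _ _ hg.symm)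

noncomputable def conjClassesEquivQuotSubgroupConjRel
    (hG : ∀ x y : G, zpowers x = zpowers y → IsConj x y) :
    ConjClasses G ≃ Quot (subgroupConjRel (G := G)) where
  toFun := Quotient.lift (fun x => Quot.mk _ ⟨zpowers x, x, rfl⟩) fun x _ hxy => by
    obtain ⟨g, rfl⟩ := isConj_iff.1 hxy
    exact Quot.sound ⟨g, by rw [MonoidHom.map_zpowers]; rfl⟩
  invFun := Quot.lift (fun H => ConjClasses.mk H.2.choose) fun H K hHK =>
    ConjClasses.mk_eq_mk_iff_isConj.2
      (isConj_of_subgroupConjRel hG hHK H.2.choose_spec K.2.choose_spec)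
  left_inv := by
    rintro ⟨x⟩
    exact ConjClasses.mk_eq_mk_iff_isConj.2
      (hG _ _ (Exists.choose_spec (p := (zpowers x = zpowers ·)) ⟨x, rfl⟩).symm)
  right_inv := by
    rintro ⟨H⟩
    exact congrArg (Quot.mk _) (Subtype.ext H.2.choose_spec.symm)

end CyclicSubgroups

/-- The number of conjugacy classes of cyclic subgroups of `S_n` equals the number of
partitions of `n`. -/
theorem card_conj_cyclic_subgroups_perm (n : ℕ) :
    Nat.card (Quot (subgroupConjRel (G := Equiv.Perm (Fin n)))) =
      Nat.card (Nat.Partition n) := by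
  rw [← Nat.card_congr (conjClassesEquivQuotSubgroupConjRel fun _ _ => isConj_of_zpowers_eq),
    Nat.card_congr conjClassesEquivPartition, Fintype.card_fin]
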